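/- arXiv:math/0606380 — 5 statements merged into one kernel-verified Lean document; each statement's English description precedes it below -/
import Mathlib

section
/- Let R be a commutative algebra equipped with two compatible Poisson brackets {·,·}₁ and {·,·}₂ (meaning every linear combination {·,·}₁ + t{·,·}₂ is a Poisson bracket). If a lies in the Poisson center of R with respect to {·,·}₁ + t₁{·,·}₂ and b lies in the Poisson center with respect to {·,·}₁ + t₂{·,·}₂ with t₁ ≠ t₂, then {a,b}₁ + t{a,b}₂ = 0 for all t ∈ ℂ. -/
/-- A bilinear map `b` on a commutative algebra `R` is a Poisson bracket if it is
antisymmetric, satisfies the Jacobi identity, and is a derivation in each argument. -/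
structure IsPoissonBracket {R : Type*} [CommRing R] [Algebra ℂ R]
    (b : R →ₗ[ℂ] R →ₗ[ℂ] R) : Prop where
  antisymm : ∀ x y : R, b x y = - b y x
  jacobi : ∀ x y z : R, b x (b y z) + b y (b z x) + b z (b x y) = 0
  leibniz : ∀ x y z : R, b x (y * z) = y * b x z + (b x y) * z

/-- if `{·,·}₁` and `{·,·}₂` are compatible Poisson brackets on a commutative
algebra `R`, `a` is Poisson-central for `{·,·}₁ + t₁{·,·}₂`, `b` is Poisson-central for
`{·,·}₁ + t₂{·,·}₂`, and `t₁ ≠ t₂`, then `{a,b}₁ + t{a,b}₂ = 0` for all `t ∈ ℂ`. -/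
theorem stmt0 {R : Type*} [CommRing R] [Algebra ℂ R]
    (b₁ b₂ : R →ₗ[ℂ] R →ₗ[ℂ] R)
    (hcompat : ∀ t : ℂ, IsPoissonBracket (b₁ + t • b₂))
    (t₁ t₂ : ℂ) (ht : t₁ ≠ t₂) (a b : R)
    (ha : ∀ r : R, b₁ a r + t₁ • b₂ a r = 0)
    (hb : ∀ r : R, b₁ b r + t₂ • b₂ b r = 0) :
    ∀ t : ℂ, b₁ a b + t • b₂ a b = 0 := by
  -- antisymmetry of b₁ (bracket at t = 0)
  have h0 := (hcompat 0).antisymm b a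
  simp only [LinearMap.add_apply, LinearMap.smul_apply, zero_smul, add_zero] at h0
  -- antisymmetry of b₁ + b₂ (bracket at t = 1)
  have h1 := (hcompat 1).antisymm b a
  simp only [LinearMap.add_apply, LinearMap.smul_apply, one_smul] at h1
  -- so b₂ is antisymmetric
  have h2 : b₂ b a = - b₂ a b := by
    have := h1
    rw [h0] at this
    linear_combination this
  -- relations
  have e1 : b₁ a b + t₁ • b₂ a b = 0 := ha b
  have e2 : b₁ a b + t₂ • b₂ a b = 0 := by
    have := hb a
    rw [h0, h2] at this
    simp only [smul_neg] at this
    linear_combination -this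
  have hb2 : b₂ a b = 0 := by
    have : (t₁ - t₂) • b₂ a b = 0 := by
      have := sub_eq_zero_of_eq (e1.trans e2.symm)
      simpa [sub_smul, add_sub_add_left_eq_sub] using this
    rcases smul_eq_zero.mp this with h | h
    · exact absurd (sub_eq_zero.mp h) ht
    · exact h
  have hb1 : b₁ a b = 0 := by simpa [hb2] using e1
  intro t
  simp [hb1, hb2]
end

section
/- Let g be a finite-dimensional Lie algebra over ℂ, μ ∈ g*, and for t ∈ ℂ let μ_t : S(g) → S(g) be the algebra automorphism induced by the shift x ↦ x + t·μ(x) on g (viewing elements of S(g) = ℂ[g*] as polynomial functions, this shifts the argument by tμ). If Φ and Ψ are Poisson-central elements of S(g) (i.e., g-invariants), then for all s, t ∈ ℂ the shifted elements Φ(· + sμ) and Ψ(· + tμ) Poisson-commute in S(g). -/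
open MvPolynomial

variable {ι g : Type*} [Fintype ι] [DecidableEq ι]
  [LieRing g] [LieAlgebra ℂ g]

/-- The linear embedding of `g` into `S(g) = ℂ[g*]`, written in the basis `b`. -/
noncomputable def toPoly (b : Module.Basis ι ℂ g) (x : g) : MvPolynomial ι ℂ :=
  ∑ i, (b.repr x i) • X i

/-- The Poisson–Lie bracket on `S(g) = ℂ[g*]`, written in the basis `b`:
`{f,h} = Σ_{i,j} ∂_i f ∂_j h · [b i, b j]`. -/
noncomputable def liePB (b : Module.Basis ι ℂ g) (f h : MvPolynomial ι ℂ) : MvPolynomial ι ℂ :=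
  ∑ i, ∑ j, pderiv i f * pderiv j h * toPoly b ⁅b i, b j⁆

/-- The argument shift `f ↦ f(· + tμ)` on `S(g) = ℂ[g*]`: the algebra automorphism
induced by `x ↦ x + t·μ(x)` on generators. -/
noncomputable def argShift (b : Module.Basis ι ℂ g) (μ : Module.Dual ℂ g) (t : ℂ) :
    MvPolynomial ι ℂ →ₐ[ℂ] MvPolynomial ι ℂ :=
  aeval (fun i => X i + C (t * μ (b i)))

/-! At a point `v ∈ g*`, the bracket `{Φ(· + sμ), Ψ(· + tμ)}` equals `v([X, Y])` with
`X = dΦ(v + sμ)` and `Y = dΨ(v + tμ)`. Invariance of `Φ` says `w([dΦ(w), ·]) = 0` for every `w`;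
used for `Φ` at `v + sμ` and for `Ψ` at `v + tμ` it gives `v([X, Y]) = -s μ([X, Y]) = -t μ([X, Y])`.
So `μ([X, Y]) = 0` when `s ≠ t`, hence for all `t` by continuity in `t`, and then `v([X, Y]) = 0`. -/

namespace MvPolynomial

variable {σ R : Type*} [CommRing R]

lemma pderiv_aeval_X_add_C (c : σ → R) (i : σ) (p : MvPolynomial σ R) :
    pderiv i (aeval (fun j => X j + C (c j)) p) = aeval (fun j => X j + C (c j)) (pderiv i p) := by
  classical
  induction p using MvPolynomial.induction_on with
  | C _ => simp
  | add p q hp hq => simp only [map_add, hp, hq]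
  | mul_X p j hp =>
    simp only [map_mul, aeval_X, pderiv_mul, hp, map_add, pderiv_X, pderiv_C, add_zero]
    rcases eq_or_ne j i with rfl | _ <;> simp [*]

lemma eval_aeval_X_add_C (c v : σ → R) (p : MvPolynomial σ R) :
    eval v (aeval (fun j => X j + C (c j)) p) = eval (v + c) p := by
  change eval₂Hom (RingHom.id R) v (aeval _ p) = _
  have hshift : (fun j => eval₂Hom (RingHom.id R) v (X j + C (c j))) = v + c := by
    funext j
    simp
  rw [aeval_eq_bind₁, eval₂Hom_bind₁, hshift]
  rfl

end MvPolynomial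

lemma Module.Basis.constr_add_smul_comp {ι R M : Type*} [CommRing R] [AddCommGroup M]
    [Module R M] (b : Module.Basis ι R M) (μ : Module.Dual R M) (v : ι → R) (t : R) :
    b.constr R (v + t • (μ ∘ b)) = b.constr R v + t • μ := by
  rw [map_add, map_smul, Function.comp_def, b.constr_self]

section

variable {ι : Type*} [Fintype ι] (b : Module.Basis ι ℂ g)

/-- The differential of `f` at the point of `g*` with coordinates `v`, as an element of
`g = (g*)*`; that point itself is `b.constr ℂ v`. -/
noncomputable def gradAt (f : MvPolynomial ι ℂ) (v : ι → ℂ) : g :=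
  ∑ i, eval v (pderiv i f) • b i

lemma eval_toPoly (v : ι → ℂ) (x : g) : eval v (toPoly b x) = b.constr ℂ v x := by
  simp [toPoly, smul_eval, mul_comm]

lemma eval_liePB (v : ι → ℂ) (f h : MvPolynomial ι ℂ) :
    eval v (liePB b f h) = b.constr ℂ v ⁅gradAt b f v, gradAt b h v⁆ := by
  rw [gradAt, gradAt, sum_lie]
  simp_rw [lie_sum]
  simp only [liePB, map_sum, map_mul, eval_toPoly, smul_lie, lie_smul, map_smul, smul_eq_mul,
    mul_assoc, mul_left_comm]

lemma gradAt_argShift (μ : Module.Dual ℂ g) (t : ℂ) (f : MvPolynomial ι ℂ) (v : ι → ℂ) :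
    gradAt b (argShift b μ t f) v = gradAt b f (v + t • (μ ∘ b)) := by
  simp only [gradAt, argShift, pderiv_aeval_X_add_C, eval_aeval_X_add_C]
  rfl

lemma constr_lie_gradAt_eq_zero {f : MvPolynomial ι ℂ} (hf : ∀ p, liePB b f p = 0)
    (v : ι → ℂ) (x : g) : b.constr ℂ v ⁅gradAt b f v, x⁆ = 0 := by
  classical
  have hbasis : ∀ k, b.constr ℂ v ⁅gradAt b f v, b k⁆ = 0 := fun k => by
    simpa [eval_liePB, gradAt, Pi.single_apply] using congrArg (eval v) (hf (X k))
  rw [← b.sum_repr x, lie_sum]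
  simp [lie_smul, hbasis]

lemma continuous_apply_gradAt (φ : Module.Dual ℂ g) (f : MvPolynomial ι ℂ) :
    Continuous fun w => φ (gradAt b f w) := by
  simp only [gradAt, map_sum, map_smul, smul_eq_mul]
  exact continuous_finsetSum _ fun i _ => (continuous_eval _).mul continuous_const

variable {b}

lemma constr_lie_gradAt_shift {f : MvPolynomial ι ℂ} (hf : ∀ p, liePB b f p = 0)
    (μ : Module.Dual ℂ g) (v : ι → ℂ) (r : ℂ) (x : g) :
    b.constr ℂ v ⁅gradAt b f (v + r • (μ ∘ b)), x⁆ =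
      -(r * μ ⁅gradAt b f (v + r • (μ ∘ b)), x⁆) := by
  have h := constr_lie_gradAt_eq_zero b hf (v + r • (μ ∘ b)) x
  rw [b.constr_add_smul_comp] at h
  simpa [eq_neg_iff_add_eq_zero] using h

lemma dual_lie_gradAt_shift_eq_zero {Φ Ψ : MvPolynomial ι ℂ} (hΦ : ∀ p, liePB b Φ p = 0)
    (hΨ : ∀ p, liePB b Ψ p = 0) (μ : Module.Dual ℂ g) (v : ι → ℂ) (s r : ℂ) :
    μ ⁅gradAt b Φ (v + s • (μ ∘ b)), gradAt b Ψ (v + r • (μ ∘ b))⁆ = 0 := by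
  set x := gradAt b Φ (v + s • (μ ∘ b))
  set y : ℂ → g := fun r => gradAt b Ψ (v + r • (μ ∘ b))
  have hoff : Set.EqOn (fun r => μ ⁅x, y r⁆) 0 {s}ᶜ := fun r hr => by
    have hx := constr_lie_gradAt_shift hΦ μ v s (y r)
    have hy := constr_lie_gradAt_shift hΨ μ v r x
    rw [← lie_skew, map_neg, map_neg, neg_inj] at hy
    have hrs : (r - s) * μ ⁅x, y r⁆ = 0 := by linear_combination hy - hx
    exact (mul_eq_zero.mp hrs).resolve_left (sub_ne_zero.mpr hr)
  have hcont : Continuous fun r => μ ⁅x, y r⁆ :=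
    (continuous_apply_gradAt b (μ ∘ₗ LieAlgebra.ad ℂ g x) Ψ).comp
      (continuous_const.add (continuous_id.smul continuous_const))
  exact congrFun (hcont.ext_on (dense_compl_singleton s) continuous_const hoff) r

end

/-- if `Φ` and `Ψ` are Poisson-central elements of `S(g)`, then for all
`s, t ∈ ℂ` the shifted elements `Φ(· + sμ)` and `Ψ(· + tμ)` Poisson-commute. -/
theorem stmt2 (b : Module.Basis ι ℂ g) (μ : Module.Dual ℂ g)
    (Φ Ψ : MvPolynomial ι ℂ)
    (hΦ : ∀ f : MvPolynomial ι ℂ, liePB b Φ f = 0)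
    (hΨ : ∀ f : MvPolynomial ι ℂ, liePB b Ψ f = 0) :
    ∀ s t : ℂ, liePB b (argShift b μ s Φ) (argShift b μ t Ψ) = 0 := by
  intro s t
  refine MvPolynomial.funext fun v => ?_
  rw [eval_liePB, gradAt_argShift, gradAt_argShift, constr_lie_gradAt_shift hΦ,
    dual_lie_gradAt_shift_eq_zero hΦ hΨ, mul_zero, neg_zero, map_zero]
end

section
/- Let g be a finite-dimensional Lie algebra over ℂ, μ ∈ g*, and Φ ∈ S(g)^g a Poisson-central element. Then all directional derivatives ∂_μⁿΦ (n ≥ 0) along μ pairwise Poisson-commute in S(g), and moreover ∂_μⁿΦ Poisson-commutes with ∂_μᵐΨ for any other invariant Ψ ∈ S(g)^g and any m, n ≥ 0. -/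
open MvPolynomial

variable {ι g : Type*} [Fintype ι] [DecidableEq ι]
  [LieRing g] [LieAlgebra ℂ g]

/-- The directional derivative `∂_μ` on `S(g) = ℂ[g*]` in the direction `μ ∈ g*`,
written in the basis `b`: `∂_μ f = Σ_i μ(b i) ∂_i f`. -/
noncomputable def dirDeriv (b : Module.Basis ι ℂ g) (μ : Module.Dual ℂ g)
    (f : MvPolynomial ι ℂ) : MvPolynomial ι ℂ :=
  ∑ i, μ (b i) • pderiv i f

/-!
The derivative `∂_μ` is a derivation commuting with all partial derivatives and sending a linear
form `x ∈ g` to the constant `μ(x)`, so `∂_μ {f, h} = {∂_μ f, h} + {f, ∂_μ h} + {f, h}_μ`, where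
`{·,·}_μ` is the constant-coefficient bracket frozen at `μ`, of which `∂_μ` is a plain derivation.
For a Casimir `Φ` induction gives `{∂_μ^{n+1} Φ, f} = -(n+1) {∂_μ^n Φ, f}_μ`. Hence, by
antisymmetry, `{∂_μ^{n+1} Φ, ∂_μ^m Ψ}` is a multiple of `{∂_μ^m Ψ, ∂_μ^n Φ}_μ`, which in turn is a
nonzero multiple of `{∂_μ^{m+1} Ψ, ∂_μ^n Φ}`, and induction on `n` concludes.
-/

namespace MvPolynomial

variable {R σ : Type*}

section CommSemiring

variable [CommSemiring R]

theorem pderiv_comm (i j : σ) (f : MvPolynomial σ R) :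
    pderiv i (pderiv j f) = pderiv j (pderiv i f) := by
  induction f using MvPolynomial.induction_on with
  | C a => simp
  | add p q hp hq => simp [hp, hq]
  | mul_X p k hp =>
    classical
    simp only [pderiv_mul, map_add, pderiv_X, hp, Pi.single_apply, apply_ite, pderiv_one, map_zero]
    split_ifs <;> ring

variable [Fintype σ]

noncomputable def dirPDeriv (v : σ → R) : Derivation R (MvPolynomial σ R) (MvPolynomial σ R) :=
  ∑ i, v i • pderiv i

theorem dirPDeriv_apply (v : σ → R) (f : MvPolynomial σ R) :
    dirPDeriv v f = ∑ i, v i • pderiv i f := by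
  rw [dirPDeriv, ← Derivation.coeFnAddMonoidHom_apply, map_sum, Finset.sum_apply]
  rfl

theorem pderiv_dirPDeriv (v : σ → R) (j : σ) (f : MvPolynomial σ R) :
    pderiv j (dirPDeriv v f) = dirPDeriv v (pderiv j f) := by
  simp only [dirPDeriv_apply, map_sum, Derivation.map_smul, pderiv_comm]

noncomputable def pderivBracket (c : σ → σ → MvPolynomial σ R) (f h : MvPolynomial σ R) :
    MvPolynomial σ R :=
  ∑ i, ∑ j, pderiv i f * pderiv j h * c i j

theorem map_pderivBracket (D : Derivation R (MvPolynomial σ R) (MvPolynomial σ R))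
    (hD : ∀ i f, D (pderiv i f) = pderiv i (D f)) (c : σ → σ → MvPolynomial σ R)
    (f h : MvPolynomial σ R) :
    D (pderivBracket c f h) = pderivBracket c (D f) h + pderivBracket c f (D h)
      + pderivBracket (fun i j ↦ D (c i j)) f h := by
  simp only [pderivBracket, map_sum, Derivation.leibniz, hD, smul_eq_mul, ← Finset.sum_add_distrib]
  refine Finset.sum_congr rfl fun i _ ↦ Finset.sum_congr rfl fun j _ ↦ ?_
  ring

end CommSemiring

theorem pderivBracket_antisymm [CommRing R] [Fintype σ] {c : σ → σ → MvPolynomial σ R}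
    (hc : ∀ i j, c j i = -c i j) (f h : MvPolynomial σ R) :
    pderivBracket c f h = -pderivBracket c h f := by
  rw [pderivBracket, Finset.sum_comm, pderivBracket, ← Finset.sum_neg_distrib]
  refine Finset.sum_congr rfl fun i _ ↦ ?_
  rw [← Finset.sum_neg_distrib]
  refine Finset.sum_congr rfl fun j _ ↦ ?_
  rw [hc]
  ring

end MvPolynomial

section ArgumentShift

variable {M : Type*} [AddCommGroup M] (D : M →+ M) (B C : M → M → M)

theorem bracket_iterate_succ_of_central
    (hB : ∀ f h, D (B f h) = B (D f) h + B f (D h) + C f h)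
    (hC : ∀ f h, D (C f h) = C (D f) h + C f (D h))
    {Φ : M} (hΦ : ∀ f, B Φ f = 0) (n : ℕ) (f : M) :
    B (D^[n + 1] Φ) f = -((n + 1) • C (D^[n] Φ) f) := by
  induction n generalizing f with
  | zero =>
    have h := hB Φ f
    rw [hΦ, hΦ, map_zero] at h
    simp only [Function.iterate_one, Function.iterate_zero_apply, zero_add, one_nsmul]
    rw [eq_neg_iff_add_eq_zero, h]
    abel
  | succ n ih =>
    have h := hB (D^[n + 1] Φ) f
    rw [ih, ih, map_neg, map_nsmul, hC, ← Function.iterate_succ_apply' D n Φ,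
      Nat.succ_eq_add_one] at h
    rw [Function.iterate_succ_apply' D (n + 1)]
    linear_combination (norm := module) -h

theorem bracket_iterate_eq_zero_of_central [IsAddTorsionFree M]
    (hB : ∀ f h, D (B f h) = B (D f) h + B f (D h) + C f h)
    (hC : ∀ f h, D (C f h) = C (D f) h + C f (D h))
    (hB_anti : ∀ f h, B f h = -B h f) (hC_anti : ∀ f h, C f h = -C h f)
    {Φ Ψ : M} (hΦ : ∀ f, B Φ f = 0) (hΨ : ∀ f, B Ψ f = 0) (n m : ℕ) :
    B (D^[n] Φ) (D^[m] Ψ) = 0 := by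
  induction n generalizing m with
  | zero => exact hΦ _
  | succ n ih =>
    have hCΨ : (m + 1) • C (D^[m] Ψ) (D^[n] Φ) = 0 := by
      rw [← neg_eq_zero, ← bracket_iterate_succ_of_central D B C hB hC hΨ, hB_anti, ih, neg_zero]
    rw [bracket_iterate_succ_of_central D B C hB hC hΦ, hC_anti,
      (nsmul_eq_zero_iff_right m.succ_ne_zero).mp hCΨ, neg_zero, smul_zero, neg_zero]

end ArgumentShift

section LieAlgebra

variable (b : Module.Basis ι ℂ g) (μ : Module.Dual ℂ g)

/-- The bracket `{f, h}_μ`: the Lie–Poisson bracket with its coefficients frozen at `μ`. -/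
noncomputable def frozenPB : MvPolynomial ι ℂ → MvPolynomial ι ℂ → MvPolynomial ι ℂ :=
  pderivBracket fun i j ↦ C (μ ⁅b i, b j⁆)

omit [DecidableEq ι] in
theorem dirDeriv_eq_dirPDeriv : dirDeriv b μ = dirPDeriv fun i ↦ μ (b i) :=
  funext fun f ↦ (dirPDeriv_apply _ f).symm

theorem dirPDeriv_toPoly (x : g) : dirPDeriv (fun i ↦ μ (b i)) (toPoly b x) = C (μ x) := by
  have hμ : μ x = ∑ i, b.repr x i * μ (b i) := by
    conv_lhs => rw [← b.sum_repr x, map_sum]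
    simp only [map_smul, smul_eq_mul]
  simp [dirPDeriv_apply, toPoly, Pi.single_apply, smul_eq_C_mul, hμ, mul_comm]

omit [DecidableEq ι] in
theorem toPoly_lie_swap (i j : ι) : toPoly b ⁅b j, b i⁆ = -toPoly b ⁅b i, b j⁆ := by
  rw [← lie_skew, toPoly, toPoly, map_neg]
  simp only [Finsupp.neg_apply, neg_smul, Finset.sum_neg_distrib]

theorem dirPDeriv_liePB (f h : MvPolynomial ι ℂ) :
    dirPDeriv (fun i ↦ μ (b i)) (liePB b f h) = liePB b (dirPDeriv (fun i ↦ μ (b i)) f) h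
      + liePB b f (dirPDeriv (fun i ↦ μ (b i)) h) + frozenPB b μ f h := by
  have := map_pderivBracket (dirPDeriv fun i ↦ μ (b i)) (fun i f ↦ (pderiv_dirPDeriv _ i f).symm)
    (fun i j ↦ toPoly b ⁅b i, b j⁆) f h
  simp only [dirPDeriv_toPoly] at this
  exact this

omit [DecidableEq ι] in
theorem dirPDeriv_frozenPB (f h : MvPolynomial ι ℂ) :
    dirPDeriv (fun i ↦ μ (b i)) (frozenPB b μ f h) = frozenPB b μ (dirPDeriv (fun i ↦ μ (b i)) f) h
      + frozenPB b μ f (dirPDeriv (fun i ↦ μ (b i)) h) := by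
  have := map_pderivBracket (dirPDeriv fun i ↦ μ (b i)) (fun i f ↦ (pderiv_dirPDeriv _ i f).symm)
    (fun i j ↦ C (μ ⁅b i, b j⁆)) f h
  have hzero : pderivBracket (fun i j ↦ dirPDeriv (fun i ↦ μ (b i)) (C (μ ⁅b i, b j⁆))) f h = 0 := by
    simp [pderivBracket, derivation_C]
  rw [hzero, add_zero] at this
  exact this

omit [DecidableEq ι] in
theorem liePB_antisymm (f h : MvPolynomial ι ℂ) : liePB b f h = -liePB b h f :=
  pderivBracket_antisymm (toPoly_lie_swap b) f h

omit [DecidableEq ι] in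
theorem frozenPB_antisymm (f h : MvPolynomial ι ℂ) : frozenPB b μ f h = -frozenPB b μ h f :=
  pderivBracket_antisymm (fun i j ↦ by rw [← map_neg, ← map_neg, lie_skew]) f h

end LieAlgebra

/-- for Poisson-central `Φ, Ψ ∈ S(g)^g`, all the directional derivatives
`∂_μⁿ Φ` and `∂_μᵐ Ψ` (for all `m, n ≥ 0`) pairwise Poisson-commute in `S(g)`;
in particular (taking `Ψ = Φ`) the `∂_μⁿ Φ` pairwise Poisson-commute. -/
theorem stmt3 (b : Module.Basis ι ℂ g) (μ : Module.Dual ℂ g)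
    (Φ Ψ : MvPolynomial ι ℂ)
    (hΦ : ∀ f : MvPolynomial ι ℂ, liePB b Φ f = 0)
    (hΨ : ∀ f : MvPolynomial ι ℂ, liePB b Ψ f = 0) :
    ∀ m n : ℕ, liePB b ((dirDeriv b μ)^[n] Φ) ((dirDeriv b μ)^[m] Ψ) = 0 := by
  intro m n
  rw [dirDeriv_eq_dirPDeriv]
  exact bracket_iterate_eq_zero_of_central
    (dirPDeriv fun i ↦ μ (b i) : MvPolynomial ι ℂ →ₗ[ℂ] MvPolynomial ι ℂ).toAddMonoidHom
    (liePB b) (frozenPB b μ) (dirPDeriv_liePB b μ) (dirPDeriv_frozenPB b μ)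
    (liePB_antisymm b) (frozenPB_antisymm b μ) hΦ hΨ n m
end

section
/- Let g = sl_r, and let A be a commutative subalgebra of U(sl_r) acting on an irreducible finite-dimensional sl_r-module V_λ with simple spectrum (a cyclic family of commuting diagonalizable operators with one-dimensional joint eigenspaces). If A lies in the closure of a family A_μ of commutative subalgebras (in the sense that A = lim_{t→0} A_{μ(t)} along a curve μ(t), with limits taken in finite-dimensional filtration pieces), then for generic μ the algebra A_μ also has simple spectrum on V_λ. (Simplicity of spectrum is a Zariski-open condition on the family.) -/
open Filter

/-- A subalgebra `S` of operators (matrices) has *simple spectrum* on `ℂ^d` if it is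
simultaneously diagonalizable in some basis with pairwise distinct joint eigenvalue
characters, i.e. all joint eigenspaces are one-dimensional. -/
def HasSimpleSpectrum {d : ℕ} (S : Subalgebra ℂ (Matrix (Fin d) (Fin d) ℂ)) : Prop :=
  ∃ (b : Module.Basis (Fin d) ℂ (Fin d → ℂ)) (χ : Fin d → (S → ℂ)),
    (∀ (a : S) (i : Fin d), (a : Matrix (Fin d) (Fin d) ℂ).mulVec (b i) = χ i a • b i)
      ∧ Function.Injective χ

/-!
Write `A t` for the algebra generated by the `T t k`. The joint eigenvalues of the generators
separate the joint eigenlines of `A 0`, so a generic linear combination `M 0 = ∑ c k • T 0 k`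
already has `d` distinct eigenvalues, i.e. a separable characteristic polynomial.
Separability means that the resultant of `χ` and `χ'` does not vanish, and this resultant is a
polynomial in the entries, so `M t = ∑ c k • T t k` stays separable for `t` near `0`. In the
commutative algebra `A t` every element preserves the eigenlines of `M t ∈ A t`, which gives
simple spectrum.
-/

open Polynomial Module Matrix Topology

section Continuity

variable {X R : Type*} [TopologicalSpace X] [CommRing R] [TopologicalSpace R] [IsTopologicalRing R]

theorem Polynomial.continuous_resultant {f g : X → R[X]}
    (hf : ∀ k, Continuous fun t ↦ (f t).coeff k) (hg : ∀ k, Continuous fun t ↦ (g t).coeff k)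
    (m n : ℕ) : Continuous fun t ↦ resultant (f t) (g t) m n := by
  refine Continuous.matrix_det (continuous_matrix fun i j ↦ ?_)
  induction j using Fin.addCases <;>
    simp only [sylvester, Matrix.of_apply, Fin.addCases_left, Fin.addCases_right] <;>
    split_ifs <;> simp [hf, hg, continuous_const]

theorem Matrix.continuous_charpoly_coeff {n : Type*} [Fintype n] [DecidableEq n]
    {M : X → Matrix n n R} (hM : Continuous M) (k : ℕ) :
    Continuous fun t ↦ (M t).charpoly.coeff k := by
  have h t : (M t).charpoly.coeff k =
      MvPolynomial.eval (fun p : n × n ↦ M t p.1 p.2) ((charpoly.univ R n).coeff k) := by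
    have hM : Matrix.of (Function.curry fun p : n × n ↦ M t p.1 p.2) = M t := rfl
    rw [← hM, ← charpoly.univ_coeff_eval₂Hom n (RingHom.id R)]
    rfl
  simp_rw [h]
  exact (MvPolynomial.continuous_eval _).comp (continuous_pi fun p ↦ by fun_prop)

end Continuity

theorem Polynomial.separable_iff_resultant_derivative_ne_zero {K : Type*} [Field K] {f : K[X]}
    (hf : f ≠ 0) : f.Separable ↔ resultant f (derivative f) ≠ 0 := by
  simp [resultant_eq_zero_iff, hf, Separable]

theorem Matrix.isOpen_setOf_charpoly_separable {X K n : Type*} [TopologicalSpace X] [Field K]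
    [CharZero K] [TopologicalSpace K] [IsTopologicalRing K] [T1Space K] [Fintype n] [DecidableEq n]
    {M : X → Matrix n n K} (hM : Continuous M) :
    IsOpen {t | (M t).charpoly.Separable} := by
  have h t : (M t).charpoly.Separable ↔ resultant (M t).charpoly (derivative (M t).charpoly)
      (Fintype.card n) (Fintype.card n - 1) ≠ 0 := by
    rw [separable_iff_resultant_derivative_ne_zero (M t).charpoly_monic.ne_zero,
      natDegree_derivative, charpoly_natDegree_eq_dim]
  simp_rw [h]
  refine isOpen_ne.preimage (continuous_resultant (continuous_charpoly_coeff hM) (fun k ↦ ?_) _ _)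
  simp_rw [coeff_derivative]
  exact (continuous_charpoly_coeff hM _).mul continuous_const

section Eigenbasis

variable {K n : Type*} [Field K] [Fintype n] [DecidableEq n] {M : Matrix n n K}
  {b : Basis n K (n → K)} {ν : n → K}

theorem Matrix.charpoly_separable_of_eigenbasis (hν : Function.Injective ν)
    (hb : ∀ i, M *ᵥ b i = ν i • b i) : M.charpoly.Separable := by
  have hdiag : LinearMap.toMatrix b b M.toLin' = Matrix.diagonal ν := by
    ext i j
    by_cases hij : i = j <;> simp [LinearMap.toMatrix_apply, hb, hij]
  rw [← charpoly_toLin', ← LinearMap.charpoly_toMatrix _ b, hdiag, charpoly_diagonal]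
  exact separable_prod_X_sub_C_iff.mpr hν

theorem Matrix.exists_eigenbasis_of_charpoly_separable [IsAlgClosed K]
    (hM : M.charpoly.Separable) :
    ∃ (b : Basis n K (n → K)) (ν : n → K), Function.Injective ν ∧ ∀ i, M *ᵥ b i = ν i • b i := by
  classical
  have hcard : Fintype.card n = Fintype.card M.charpoly.roots.toFinset := by
    rw [Fintype.card_coe, Multiset.toFinset_card_of_nodup (nodup_roots hM),
      IsAlgClosed.card_roots_eq_natDegree, charpoly_natDegree_eq_dim]
  let e := Fintype.equivOfCardEq hcard
  let ν i : K := e i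
  have hν : Function.Injective ν := Subtype.val_injective.comp e.injective
  have hev : ∀ i, Module.End.HasEigenvalue M.toLin' (ν i) := fun i ↦ by
    rw [Module.End.hasEigenvalue_iff_isRoot_charpoly, charpoly_toLin']
    exact (mem_roots hM.ne_zero).mp (Multiset.mem_toFinset.mp (e i).2)
  choose v hv using fun i ↦ Module.End.HasEigenvalue.exists_hasEigenvector (hev i)
  refine ⟨basisOfLinearIndependentOfCardEqFinrank' v
    (Module.End.eigenvectors_linearIndependent' _ ν hν v hv) (finrank_fintype_fun_eq_card K).symm,
    ν, hν, fun i ↦ ?_⟩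
  simpa using (hv i).apply_eq_smul

theorem Module.Basis.repr_mulVec_of_eigenbasis (hb : ∀ i, M *ᵥ b i = ν i • b i) (v : n → K)
    (j : n) : b.repr (M *ᵥ v) j = ν j * b.repr v j := by
  have h : (b.coord j).comp M.toLin' = ν j • b.coord j :=
    b.ext fun i ↦ by by_cases hij : i = j <;> simp [hb, hij]
  simpa using LinearMap.congr_fun h v

theorem Module.Basis.eq_smul_of_mulVec_eq_smul (hν : Function.Injective ν)
    (hb : ∀ i, M *ᵥ b i = ν i • b i) {v : n → K} {i : n} (hv : M *ᵥ v = ν i • v) :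
    v = b.repr v i • b i := by
  refine b.repr.injective (Finsupp.ext fun j ↦ ?_)
  have hj := b.repr_mulVec_of_eigenbasis hb v j
  rw [hv, map_smul, Finsupp.smul_apply, smul_eq_mul] at hj
  by_cases hij : j = i
  · simp [hij]
  · have : b.repr v j = 0 := (mul_eq_zero.mp (by linear_combination hj)).resolve_left
      (sub_ne_zero.mpr fun h ↦ hij (hν h.symm))
    simp [Ne.symm hij, this]

end Eigenbasis

theorem Module.exists_dual_comp_injective {ι K V : Type*} [Finite ι] [Field K] [Infinite K]
    [AddCommGroup V] [Module K V] {w : ι → V} (hw : Function.Injective w) :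
    ∃ f : Dual K V, Function.Injective (f ∘ w) := by
  obtain ⟨f, hf⟩ := exists_dual_forall_apply_ne_zero (K := K) (ι := {p : ι × ι // p.1 ≠ p.2})
    (fun p ↦ w p.1.1 - w p.1.2) fun p ↦ sub_ne_zero.mpr (hw.ne p.2)
  refine ⟨f, fun i j hij ↦ by_contra fun hne ↦ hf ⟨(i, j), hne⟩ ?_⟩
  simpa [sub_eq_zero] using hij

section SimpleSpectrum

variable {K n : Type*} [Field K] [Fintype n] [DecidableEq n]

def Matrix.sameEigenvalueSubalgebra (u v : n → K) : Subalgebra K (Matrix n n K) where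
  carrier := {a | ∃ c : K, a *ᵥ u = c • u ∧ a *ᵥ v = c • v}
  mul_mem' := by
    rintro a a' ⟨c, hu, hv⟩ ⟨c', hu', hv'⟩
    exact ⟨c * c', by rw [← mulVec_mulVec, hu', mulVec_smul, hu, smul_smul, mul_comm],
      by rw [← mulVec_mulVec, hv', mulVec_smul, hv, smul_smul, mul_comm]⟩
  add_mem' := by
    rintro a a' ⟨c, hu, hv⟩ ⟨c', hu', hv'⟩
    exact ⟨c + c', by rw [add_mulVec, hu, hu', add_smul], by rw [add_mulVec, hv, hv', add_smul]⟩
  algebraMap_mem' r := ⟨r, by simp [algebraMap_eq_diagonal, mulVec_diagonal, funext_iff],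
    by simp [algebraMap_eq_diagonal, mulVec_diagonal, funext_iff]⟩

theorem HasSimpleSpectrum.exists_eigenbasis_of_adjoin_range {d m : ℕ}
    {T : Fin m → Matrix (Fin d) (Fin d) ℂ}
    (h : HasSimpleSpectrum (Algebra.adjoin ℂ (Set.range T))) :
    ∃ (b : Basis (Fin d) ℂ (Fin d → ℂ)) (w : Fin d → Fin m → ℂ),
      Function.Injective w ∧ ∀ i k, T k *ᵥ b i = w i k • b i := by
  obtain ⟨b, χ, hχ, hinj⟩ := h
  let w i k := χ i ⟨T k, Algebra.subset_adjoin ⟨k, rfl⟩⟩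
  refine ⟨b, w, fun i j hij ↦ hinj (funext fun a ↦ ?_), fun i k ↦ hχ ⟨T k, _⟩ i⟩
  have hgen : Set.range T ⊆ sameEigenvalueSubalgebra (b i) (b j) := by
    rintro _ ⟨k, rfl⟩
    exact ⟨w i k, hχ ⟨T k, _⟩ i, by rw [congrFun hij k]; exact hχ ⟨T k, _⟩ j⟩
  obtain ⟨c, hi, hj⟩ := Algebra.adjoin_le hgen a.2
  exact (smul_left_injective ℂ (b.ne_zero i) ((hχ a i).symm.trans hi)).trans
    (smul_left_injective ℂ (b.ne_zero j) ((hχ a j).symm.trans hj)).symm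

theorem hasSimpleSpectrum_of_eigenbasis {d : ℕ} {S : Subalgebra ℂ (Matrix (Fin d) (Fin d) ℂ)}
    [IsMulCommutative S] {M : Matrix (Fin d) (Fin d) ℂ} (hM : M ∈ S)
    {b : Basis (Fin d) ℂ (Fin d → ℂ)} {ν : Fin d → ℂ} (hν : Function.Injective ν)
    (hb : ∀ i, M *ᵥ b i = ν i • b i) : HasSimpleSpectrum S := by
  refine ⟨b, fun i a ↦ b.repr ((a : Matrix _ _ ℂ) *ᵥ b i) i, fun a i ↦ ?_, fun i j hij ↦ ?_⟩
  · refine b.eq_smul_of_mulVec_eq_smul hν hb ?_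
    rw [mulVec_mulVec, setLike_mul_comm hM a.2, ← mulVec_mulVec, hb, mulVec_smul]
  · have h := congrFun hij ⟨M, hM⟩
    simp only [hb, map_smul, Basis.repr_self, Finsupp.smul_apply, Finsupp.single_eq_same,
      smul_eq_mul, mul_one] at h
    exact hν h

end SimpleSpectrum

/-- let `A t` be an algebraic (continuous) family of commutative
subalgebras of `End(V_λ)`, `V_λ = ℂ^d`, given as the algebras generated by a
continuously varying family of operators `T t`, and suppose the limit member `A 0`
(e.g. the Gelfand–Tsetlin algebra, a limit of the family `A_μ`) has simple spectrum on
`V_λ`.  Then for generic parameters — all `t` in a punctured neighborhood of `0` — the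
algebra `A t` has simple spectrum on `V_λ`: simplicity of spectrum is an open condition
on the family. -/
theorem stmt17 {d m : ℕ}
    (T : ℂ → Fin m → Matrix (Fin d) (Fin d) ℂ)
    (hT : Continuous T)
    (hcomm : ∀ (t : ℂ) (i j : Fin m), T t i * T t j = T t j * T t i)
    (h0 : HasSimpleSpectrum (Algebra.adjoin ℂ (Set.range (T 0)))) :
    ∀ᶠ t in nhdsWithin (0 : ℂ) {0}ᶜ,
      HasSimpleSpectrum (Algebra.adjoin ℂ (Set.range (T t))) := by
  obtain ⟨b₀, w, hw, hb₀⟩ := h0.exists_eigenbasis_of_adjoin_range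
  obtain ⟨f, hf⟩ := exists_dual_comp_injective (K := ℂ) hw
  let M t := ∑ k, f (Pi.single k 1) • T t k
  have hM_mem t : M t ∈ Algebra.adjoin ℂ (Set.range (T t)) :=
    Subalgebra.sum_mem _ fun k _ ↦
      Subalgebra.smul_mem _ (Algebra.subset_adjoin (Set.mem_range_self k)) _
  have hf_apply (x : Fin m → ℂ) : f x = ∑ k, x k * f (Pi.single k 1) := by
    rw [f.pi_apply_eq_sum_univ x]
    congr! 3 with k
    ext j
    simp [Pi.single_apply, eq_comm]
  have hM₀ i : M 0 *ᵥ b₀ i = f (w i) • b₀ i := by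
    simp only [M, sum_mulVec, smul_mulVec, hb₀, smul_smul, ← Finset.sum_smul, hf_apply (w i),
      mul_comm]
  have hsep : ∀ᶠ t in 𝓝 0, (M t).charpoly.Separable :=
    (isOpen_setOf_charpoly_separable (by fun_prop)).mem_nhds
      (charpoly_separable_of_eigenbasis hf hM₀)
  filter_upwards [nhdsWithin_le_nhds hsep] with t ht
  have := Algebra.isMulCommutative_adjoin ℂ (s := Set.range (T t)) <| by
    rintro _ ⟨i, rfl⟩ _ ⟨j, rfl⟩
    exact hcomm t i j
  obtain ⟨b, ν, hν, hb⟩ := exists_eigenbasis_of_charpoly_separable ht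
  exact hasSimpleSpectrum_of_eigenbasis (hM_mem t) hν hb
end

section
/- Let g be a complex semisimple Lie algebra and A(z₁,…,z_n) ⊂ U(g)^{⊗n} the image of a subalgebra A ⊂ U(ĝ₋) under φ_{z₁,…,z_n} = (φ_{z₁}⊗…⊗φ_{z_n})∘diag_n, where A is stable under the derivation ∂_t of U(ĝ₋) induced by ∂_t(g⊗tᵐ) = m·g⊗t^{m−1}. Then A(z₁,…,z_n) is stable under simultaneous translation of parameters: A(z₁+b,…,z_n+b) = A(z₁,…,z_n) for all b with all z_i + b ≠ 0. -/
/-!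
Put `q = ∏ᵢ (X + zᵢ)` and `R = ℂ[X][q⁻¹]`. Every `a ∈ U(ĝ₋)` has a representative
`F ∈ R ⊗ U(g)^{⊗n}` with `F(b) = φ_{z+b}(a)` whose `k`-th derivative at `0` is `φ_z(∂_tᵏ a)`:
on the generators `F = ∑ᵢ (X + zᵢ)^{-(m+1)} ⊗ x^{(i)}`, and by the Leibniz rules the pairs `(F, a)`
with matching jets form a subalgebra. If `a ∈ A` and `μ` is a linear form vanishing on `A(z)`, the
rational function `μ(F)` therefore has zero Taylor series at `0` (`R` embeds in `ℂ⟦X⟧` since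
`q(0) ≠ 0`), so it vanishes, and `μ(φ_{z+b}(a)) = μ(F)(b) = 0`. The reverse inclusion is the same
argument for the shift by `-b`.
-/

open scoped TensorProduct

variable {g : Type*} [LieRing g] [LieAlgebra ℂ g]

/-- `x^{(i)}`: the element `1 ⊗ ⋯ ⊗ x ⊗ ⋯ ⊗ 1` of `U(g)^{⊗ n}`. -/
noncomputable def slot {n : ℕ} (i : Fin n) (x : g) :
    ⨂[ℂ] _ : Fin n, UniversalEnvelopingAlgebra ℂ g :=
  PiTensorProduct.tprod ℂ
    (Function.update (fun _ => (1 : UniversalEnvelopingAlgebra ℂ g)) i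
      (UniversalEnvelopingAlgebra.ι ℂ x))

open Polynomial
open scoped PowerSeries

theorem UniversalEnvelopingAlgebra.adjoin_range_ι (R L : Type*) [CommRing R] [LieRing L]
    [LieAlgebra R L] :
    Algebra.adjoin R (Set.range (UniversalEnvelopingAlgebra.ι R (L := L))) = ⊤ := by
  have hrange : Set.range (UniversalEnvelopingAlgebra.ι R (L := L))
      = UniversalEnvelopingAlgebra.mkAlgHom R L '' Set.range (TensorAlgebra.ι R) := by
    rw [← Set.range_comp]; rfl
  rw [hrange, ← AlgHom.map_adjoin, TensorAlgebra.adjoin_range_ι, Algebra.map_top,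
    AlgHom.range_eq_top]
  exact RingCon.mkₐ_surjective (α := R) _

theorem LinearMap.map_algebraMap_eq_zero_of_leibniz {R A : Type*} [CommRing R] [Ring A]
    [Algebra R A] {d : A →ₗ[R] A} (hd : ∀ a b, d (a * b) = a * d b + d a * b) (r : R) :
    d (algebraMap R A r) = 0 := by
  have h1 : d 1 = 0 := by simpa using hd 1 1
  rw [Algebra.algebraMap_eq_smul_one, map_smul, h1, smul_zero]

theorem Derivation.rTensor_leibniz {R A T : Type*} [CommRing R] [CommRing A] [Algebra R A]
    [Ring T] [Algebra R T] (δ : Derivation R A A) (x y : A ⊗[R] T) :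
    (δ : A →ₗ[R] A).rTensor T (x * y)
      = x * (δ : A →ₗ[R] A).rTensor T y + (δ : A →ₗ[R] A).rTensor T x * y := by
  induction x using TensorProduct.induction_on with
  | zero => simp
  | add x x' hx hx' => simp only [add_mul, map_add, hx, hx']; abel
  | tmul a t =>
    induction y using TensorProduct.induction_on with
    | zero => simp
    | add y y' hy hy' => simp only [mul_add, map_add, hy, hy']; abel
    | tmul a' t' =>
      simp only [Algebra.TensorProduct.tmul_mul_tmul, LinearMap.rTensor_tmul,
        Derivation.coeFn_coe, Derivation.leibniz, smul_eq_mul, TensorProduct.add_tmul]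
      rw [mul_comm a' (δ a)]

section JetEqualizer

variable {R S U T : Type*} [CommRing R] [Ring S] [Ring U] [Ring T]
  [Algebra R S] [Algebra R U] [Algebra R T] {d : S →ₗ[R] S} {D : U →ₗ[R] U}

theorem map_iterate_mul_eq_of_jets_eq (hd : ∀ a b, d (a * b) = a * d b + d a * b)
    (hD : ∀ a b, D (a * b) = a * D b + D a * b) (ε : S →ₐ[R] T) (ψ : U →ₐ[R] T) {s s' : S}
    {u u' : U} (h : ∀ j, ε (d^[j] s) = ψ (D^[j] u)) (h' : ∀ j, ε (d^[j] s') = ψ (D^[j] u'))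
    (k : ℕ) : ε (d^[k] (s * s')) = ψ (D^[k] (u * u')) := by
  induction k generalizing s s' u u' with
  | zero => simpa using congr_arg₂ (· * ·) (h 0) (h' 0)
  | succ k ih =>
    have shift : ∀ s u, (∀ j, ε (d^[j] s) = ψ (D^[j] u)) →
        ∀ j, ε (d^[j] (d s)) = ψ (D^[j] (D u)) :=
      fun s u h j => h (j + 1)
    rw [Function.iterate_succ_apply, Function.iterate_succ_apply, hd, hD, iterate_map_add,
      iterate_map_add, map_add, map_add, ih h (shift s' u' h'), ih (shift s u h) h']

def jetEqualizer (hd : ∀ a b, d (a * b) = a * d b + d a * b)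
    (hD : ∀ a b, D (a * b) = a * D b + D a * b) (ε : S →ₐ[R] T) (ψ : U →ₐ[R] T) :
    Subalgebra R (S × U) where
  carrier := {p | ∀ k, ε (d^[k] p.1) = ψ (D^[k] p.2)}
  mul_mem' h h' := map_iterate_mul_eq_of_jets_eq hd hD ε ψ h h'
  add_mem' h h' k := by
    simp only [Prod.fst_add, Prod.snd_add, iterate_map_add, map_add, h k, h' k]
  algebraMap_mem' r
    | 0 => by simp
    | k + 1 => by
      simp only [Prod.algebraMap_apply, Function.iterate_succ_apply,
        d.map_algebraMap_eq_zero_of_leibniz hd, D.map_algebraMap_eq_zero_of_leibniz hD,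
        iterate_map_zero, map_zero]

theorem mk_mem_jetEqualizer_of_ladder (hd : ∀ a b, d (a * b) = a * d b + d a * b)
    (hD : ∀ a b, D (a * b) = a * D b + D a * b) (ε : S →ₐ[R] T) (ψ : U →ₐ[R] T)
    {s : ℕ → S} {u : ℕ → U} (c : ℕ → R) (hs : ∀ m, d (s m) = c m • s (m + 1))
    (hu : ∀ m, D (u m) = c m • u (m + 1)) (h₀ : ∀ m, ε (s m) = ψ (u m)) (m : ℕ) :
    (s m, u m) ∈ jetEqualizer hd hD ε ψ := by
  intro k
  induction k generalizing m with
  | zero => exact h₀ m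
  | succ k ih =>
    simp only [Function.iterate_succ_apply, hs, hu, ← Module.End.pow_apply, map_smul] at ih ⊢
    rw [ih (m + 1)]

end JetEqualizer

section Specialize

variable {R A B T : Type*} [CommRing R] [CommRing A] [CommRing B] [Algebra R A] [Algebra R B]
  [Ring T] [Algebra R T]

noncomputable def specializeLeft (χ : A →ₐ[R] R) : A ⊗[R] T →ₐ[R] T :=
  (Algebra.TensorProduct.lid R T).toAlgHom.comp (Algebra.TensorProduct.map χ (AlgHom.id R T))

@[simp]
theorem specializeLeft_tmul (χ : A →ₐ[R] R) (a : A) (t : T) :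
    specializeLeft χ (a ⊗ₜ t) = χ a • t := by
  simp [specializeLeft]

noncomputable def rightContraction (μ : T →ₗ[R] R) : A ⊗[R] T →ₗ[R] A :=
  TensorProduct.rid R A ∘ₗ μ.lTensor A

@[simp]
theorem rightContraction_tmul (μ : T →ₗ[R] R) (a : A) (t : T) :
    rightContraction μ (a ⊗ₜ t) = μ t • a := by
  simp [rightContraction]

theorem rightContraction_rTensor (μ : T →ₗ[R] R) (f : A →ₗ[R] B) (x : A ⊗[R] T) :
    rightContraction μ (f.rTensor T x) = f (rightContraction μ x) := by
  induction x using TensorProduct.induction_on with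
  | zero => simp
  | add x x' hx hx' => simp only [map_add, hx, hx']
  | tmul a t => simp

theorem rightContraction_map (μ : T →ₗ[R] R) (f : A →ₐ[R] B) (x : A ⊗[R] T) :
    rightContraction μ (Algebra.TensorProduct.map f (AlgHom.id R T) x)
      = f (rightContraction μ x) := by
  induction x using TensorProduct.induction_on with
  | zero => simp
  | add x x' hx hx' => simp only [map_add, hx, hx']
  | tmul a t => simp

theorem rightContraction_iterate_rTensor (μ : T →ₗ[R] R) (f : A →ₗ[R] A) (k : ℕ)
    (x : A ⊗[R] T) : rightContraction μ ((f.rTensor T)^[k] x) = f^[k] (rightContraction μ x) :=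
  Function.Semiconj.iterate_right (rightContraction_rTensor μ f) k x

theorem apply_specializeLeft (μ : T →ₗ[R] R) (χ : A →ₐ[R] R) (x : A ⊗[R] T) :
    μ (specializeLeft χ x) = χ (rightContraction μ x) := by
  induction x using TensorProduct.induction_on with
  | zero => simp
  | add x x' hx hx' => simp only [map_add, hx, hx']
  | tmul a t => simp [mul_comm]

end Specialize

namespace PowerSeries

variable {K T : Type*} [Field K] [Ring T] [Algebra K T]

noncomputable def constantCoeffAlgHom : K⟦X⟧ →ₐ[K] K :=
  { constantCoeff with commutes' := fun r => by simp }

@[simp]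
theorem constantCoeffAlgHom_apply (f : K⟦X⟧) : constantCoeffAlgHom f = constantCoeff f :=
  rfl

theorem eq_zero_of_forall_constantCoeff_iterate_derivative_eq_zero [CharZero K] {f : K⟦X⟧}
    (h : ∀ k, constantCoeff ((d⁄dX K)^[k] f) = 0) : f = 0 := by
  ext k
  have hk := h k
  rw [constantCoeff_iterate_derivative] at hk
  simpa [Nat.factorial_ne_zero] using hk

theorem constantCoeff_eq_inv_of_mul_X_add_C_eq_one {v : K⟦X⟧} {c : K} (hv : v * (X + C c) = 1) :
    constantCoeff v = c⁻¹ :=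
  eq_inv_of_mul_eq_one_left (by simpa using congr_arg constantCoeff hv)

theorem derivative_pow_of_mul_X_add_C_eq_one {v : K⟦X⟧} {c : K} (hv : v * (X + C c) = 1)
    (m : ℕ) : d⁄dX K (v ^ (m + 1)) = (-(m + 1 : K)) • v ^ (m + 2) := by
  rw [Derivation.leibniz_pow, Derivation.leibniz_of_mul_eq_one _ hv]
  simp [Algebra.smul_def, pow_add]
  ring

theorem rTensor_derivative_sum_pow_tmul {ι : Type*} (s : Finset ι) {v : ι → K⟦X⟧} {c : ι → K}
    (hv : ∀ i, v i * (X + C (c i)) = 1) (t : ι → T) (m : ℕ) :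
    (d⁄dX K : K⟦X⟧ →ₗ[K] K⟦X⟧).rTensor T (∑ i ∈ s, (v i ^ (m + 1)) ⊗ₜ[K] t i)
      = (-(m + 1 : K)) • ∑ i ∈ s, (v i ^ (m + 1 + 1)) ⊗ₜ[K] t i := by
  simp only [map_sum, LinearMap.rTensor_tmul, Derivation.coeFn_coe,
    derivative_pow_of_mul_X_add_C_eq_one (hv _), Finset.smul_sum, TensorProduct.smul_tmul']

end PowerSeries

section AwayFromPolynomial

variable {K : Type*} [Field K] {q : K[X]}

theorem isUnit_coe_powerSeries_of_eval_zero_ne_zero (hq : q.eval 0 ≠ 0) : IsUnit (q : K⟦X⟧) := by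
  rw [PowerSeries.isUnit_iff_constantCoeff, Polynomial.constantCoeff_coe, coeff_zero_eq_eval_zero]
  exact hq.isUnit

noncomputable def awayToPowerSeries (hq : q.eval 0 ≠ 0) : Localization.Away q →ₐ[K] K⟦X⟧ :=
  IsLocalization.Away.liftAlgHom q (f := Polynomial.coeToPowerSeries.algHom K)
    (by simpa using isUnit_coe_powerSeries_of_eval_zero_ne_zero hq)

theorem awayToPowerSeries_algebraMap (hq : q.eval 0 ≠ 0) (p : K[X]) :
    awayToPowerSeries hq (algebraMap K[X] (Localization.Away q) p) = p := by
  simp [awayToPowerSeries]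

theorem awayToPowerSeries_injective (hq : q.eval 0 ≠ 0) :
    Function.Injective (awayToPowerSeries hq) := by
  have hq' : q ≠ 0 := by rintro rfl; simp at hq
  refine (IsLocalization.lift_injective_iff _).2 fun a a' => ?_
  rw [(IsLocalization.injective (Localization.Away q)
    (powers_le_nonZeroDivisors_of_noZeroDivisors hq')).eq_iff]
  simp

noncomputable def awayEval (b : K) (hb : q.eval b ≠ 0) : Localization.Away q →ₐ[K] K :=
  IsLocalization.Away.liftAlgHom q (f := Polynomial.aeval b) (by simpa using hb.isUnit)

theorem awayEval_algebraMap {b : K} (hb : q.eval b ≠ 0) (p : K[X]) :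
    awayEval b hb (algebraMap K[X] (Localization.Away q) p) = p.eval b := by
  simp [awayEval]

end AwayFromPolynomial

theorem specializeLeft_mem_of_forall_jet_mem {K R T : Type*} [Field K] [CharZero K] [CommRing R]
    [Algebra K R] [Ring T] [Algebra K T] {ι₀ : R →ₐ[K] K⟦X⟧} (hι₀ : Function.Injective ι₀)
    (χ : R →ₐ[K] K) {V : Submodule K T} {F : R ⊗[K] T}
    (hF : ∀ k, specializeLeft PowerSeries.constantCoeffAlgHom
      (((d⁄dX K : K⟦X⟧ →ₗ[K] K⟦X⟧).rTensor T)^[k]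
        (Algebra.TensorProduct.map ι₀ (AlgHom.id K T) F)) ∈ V) :
    specializeLeft χ F ∈ V := by
  rw [← Subspace.forall_mem_dualAnnihilator_apply_eq_zero_iff]
  intro μ hμ
  suffices rightContraction μ F = 0 by rw [apply_specializeLeft, this, map_zero]
  refine hι₀ (?_ : _ = ι₀ 0)
  rw [map_zero, ← rightContraction_map]
  refine PowerSeries.eq_zero_of_forall_constantCoeff_iterate_derivative_eq_zero fun k => ?_
  have hk := (apply_specializeLeft μ PowerSeries.constantCoeffAlgHom _).symm.trans
    ((Submodule.mem_dualAnnihilator μ).1 hμ _ (hF k))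
  rw [rightContraction_iterate_rTensor] at hk
  exact hk

section Translation

variable {N T : Type*} [LieRing N] [LieAlgebra ℂ N] [Ring T] [Algebra ℂ T] {n : ℕ}
  (e : ℕ → g →ₗ[ℂ] N) (t : Fin n → g → T)
  (φ : ∀ z : Fin n → ℂ, (∀ i, z i ≠ 0) → (UniversalEnvelopingAlgebra ℂ N →ₐ[ℂ] T))
  (D : UniversalEnvelopingAlgebra ℂ N →ₗ[ℂ] UniversalEnvelopingAlgebra ℂ N)

theorem exists_jets_eq_and_specializeLeft_eq (he : Function.Surjective (Finsupp.lsum ℂ e))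
    (hφ : ∀ (z : Fin n → ℂ) (hz : ∀ i, z i ≠ 0) (m : ℕ) (x : g),
      φ z hz (UniversalEnvelopingAlgebra.ι ℂ (e m x)) = ∑ i, ((z i)⁻¹) ^ (m + 1) • t i x)
    (hLeibniz : ∀ a b, D (a * b) = a * D b + D a * b)
    (hDe : ∀ (m : ℕ) (x : g), D (UniversalEnvelopingAlgebra.ι ℂ (e m x))
        = (-(m + 1) : ℂ) • UniversalEnvelopingAlgebra.ι ℂ (e (m + 1) x))
    {R : Type*} [CommRing R] [Algebra ℂ R] (ι₀ : R →ₐ[ℂ] ℂ⟦X⟧) (χ : R →ₐ[ℂ] ℂ)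
    (z : Fin n → ℂ) (hz : ∀ i, z i ≠ 0) (w : Fin n → ℂ) (hw : ∀ i, w i ≠ 0) (v : Fin n → R)
    (hvι₀ : ∀ i, ι₀ (v i) * (PowerSeries.X + PowerSeries.C (z i)) = 1)
    (hvχ : ∀ i, χ (v i) = (w i)⁻¹) (a : UniversalEnvelopingAlgebra ℂ N) :
    ∃ F : R ⊗[ℂ] T,
      (∀ k, specializeLeft PowerSeries.constantCoeffAlgHom
        (((d⁄dX ℂ : ℂ⟦X⟧ →ₗ[ℂ] ℂ⟦X⟧).rTensor T)^[k]
          (Algebra.TensorProduct.map ι₀ (AlgHom.id ℂ T) F)) = φ z hz (D^[k] a)) ∧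
      specializeLeft χ F = φ w hw a := by
  set J := jetEqualizer ((d⁄dX ℂ).rTensor_leibniz (T := T)) hLeibniz
    (specializeLeft PowerSeries.constantCoeffAlgHom) (φ z hz)
  set representable : Subalgebra ℂ (UniversalEnvelopingAlgebra ℂ N) :=
    (J.comap ((Algebra.TensorProduct.map ι₀ (AlgHom.id ℂ T)).prodMap (AlgHom.id ℂ _)) ⊓
      AlgHom.equalizer ((specializeLeft χ).comp (AlgHom.fst ℂ _ _))
        ((φ w hw).comp (AlgHom.snd ℂ _ _))).map (AlgHom.snd ℂ _ _)
  have mem_representable : ∀ a, a ∈ representable ↔ ∃ F : R ⊗[ℂ] T,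
      (Algebra.TensorProduct.map ι₀ (AlgHom.id ℂ T) F, a) ∈ J ∧ specializeLeft χ F = φ w hw a :=
    fun a => ⟨fun ⟨⟨F, _⟩, ⟨hJ, hχ⟩, h⟩ => h ▸ ⟨F, hJ, hχ⟩,
      fun ⟨F, hJ, hχ⟩ => ⟨(F, a), ⟨hJ, hχ⟩, rfl⟩⟩
  have hgen : ∀ m x, UniversalEnvelopingAlgebra.ι ℂ (e m x) ∈ representable := by
    intro m x
    refine (mem_representable _).2 ⟨∑ i, (v i ^ (m + 1)) ⊗ₜ t i x, ?_, ?_⟩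
    · simp only [map_sum, Algebra.TensorProduct.map_tmul, map_pow, AlgHom.id_apply]
      refine mk_mem_jetEqualizer_of_ladder _ _ _ _
        (s := fun m => ∑ i, (ι₀ (v i) ^ (m + 1)) ⊗ₜ t i x)
        (u := fun m => UniversalEnvelopingAlgebra.ι ℂ (e m x)) (fun m => -(m + 1 : ℂ))
        (fun m => PowerSeries.rTensor_derivative_sum_pow_tmul _ hvι₀ _ m) (fun m => hDe m x)
        (fun m => ?_) m
      rw [hφ, map_sum]
      refine Finset.sum_congr rfl fun i _ => ?_
      rw [specializeLeft_tmul, map_pow, PowerSeries.constantCoeffAlgHom_apply,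
        PowerSeries.constantCoeff_eq_inv_of_mul_X_add_C_eq_one (hvι₀ i)]
    · rw [hφ, map_sum]
      refine Finset.sum_congr rfl fun i _ => ?_
      rw [specializeLeft_tmul, map_pow, hvχ]
  suffices representable = ⊤ from (mem_representable a).1 (this ▸ Algebra.mem_top)
  rw [eq_top_iff, ← UniversalEnvelopingAlgebra.adjoin_range_ι, Algebra.adjoin_le_iff]
  rintro _ ⟨y, rfl⟩
  obtain ⟨f, rfl⟩ := he y
  rw [Finsupp.lsum_apply, map_finsuppSum]
  exact Subalgebra.sum_mem _ fun m _ => hgen m (f m)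

theorem map_le_map_of_translate (he : Function.Surjective (Finsupp.lsum ℂ e))
    (hφ : ∀ (z : Fin n → ℂ) (hz : ∀ i, z i ≠ 0) (m : ℕ) (x : g),
      φ z hz (UniversalEnvelopingAlgebra.ι ℂ (e m x)) = ∑ i, ((z i)⁻¹) ^ (m + 1) • t i x)
    (hLeibniz : ∀ a b, D (a * b) = a * D b + D a * b)
    (hDe : ∀ (m : ℕ) (x : g), D (UniversalEnvelopingAlgebra.ι ℂ (e m x))
        = (-(m + 1) : ℂ) • UniversalEnvelopingAlgebra.ι ℂ (e (m + 1) x))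
    (A : Subalgebra ℂ (UniversalEnvelopingAlgebra ℂ N)) (hA : ∀ a ∈ A, D a ∈ A)
    (z : Fin n → ℂ) (hz : ∀ i, z i ≠ 0) (w : Fin n → ℂ) (hw : ∀ i, w i ≠ 0)
    (b : ℂ) (hb : ∀ i, w i = z i + b) :
    A.map (φ w hw) ≤ A.map (φ z hz) := by
  set q : ℂ[X] := ∏ i, (X + C (z i))
  have hq : ∀ s : ℂ, q.eval s = ∏ i, (s + z i) := fun s => by simp [q, eval_prod]
  have hq0 : q.eval 0 ≠ 0 := by
    rw [hq]; exact Finset.prod_ne_zero_iff.2 fun i _ => by simpa using hz i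
  have hqb : q.eval b ≠ 0 := by
    rw [hq]; exact Finset.prod_ne_zero_iff.2 fun i _ => by rw [add_comm, ← hb]; exact hw i
  have hunit : ∀ i, IsUnit (algebraMap ℂ[X] (Localization.Away q) (X + C (z i))) := fun i =>
    IsLocalization.Away.isUnit_of_dvd q (Finset.dvd_prod_of_mem _ (Finset.mem_univ i))
  set v : Fin n → Localization.Away q := fun i => ((hunit i).unit⁻¹ :)
  have hv : ∀ {P : Type} [CommRing P] [Algebra ℂ P] (χ : Localization.Away q →ₐ[ℂ] P) i,
      χ (v i) * χ (algebraMap ℂ[X] _ (X + C (z i))) = 1 := fun χ i => by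
    rw [← map_mul, IsUnit.val_inv_mul, map_one]
  intro y hy
  obtain ⟨a, ha, rfl⟩ := Subalgebra.mem_map.1 hy
  obtain ⟨F, hjet, hval⟩ := exists_jets_eq_and_specializeLeft_eq e t φ D he hφ hLeibniz hDe
    (awayToPowerSeries hq0) (awayEval b hqb) z hz w hw v
    (fun i => by simpa [awayToPowerSeries_algebraMap] using hv (awayToPowerSeries hq0) i)
    (fun i => eq_inv_of_mul_eq_one_left
      (by simpa [awayEval_algebraMap, hb, add_comm] using hv (awayEval b hqb) i)) a
  rw [← Subalgebra.mem_toSubmodule, ← hval]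
  refine specializeLeft_mem_of_forall_jet_mem (awayToPowerSeries_injective hq0) _ fun k => ?_
  rw [hjet k]
  exact Subalgebra.mem_map.2 ⟨_, Set.MapsTo.iterate hA k ha, rfl⟩

end Translation

theorem stmt19_general {N : Type*} [LieRing N] [LieAlgebra ℂ N]
    (e : ℕ → g →ₗ[ℂ] N)
    (hbij : Function.Bijective (Finsupp.lsum ℂ e))
    {n : ℕ}
    (φ : ∀ z : Fin n → ℂ, (∀ i, z i ≠ 0) →
      (UniversalEnvelopingAlgebra ℂ N →ₐ[ℂ]
        ⨂[ℂ] _ : Fin n, UniversalEnvelopingAlgebra ℂ g))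
    (hφ : ∀ (z : Fin n → ℂ) (hz : ∀ i, z i ≠ 0) (m : ℕ) (x : g),
      φ z hz (UniversalEnvelopingAlgebra.ι ℂ (e m x))
        = ∑ i, ((z i)⁻¹) ^ (m + 1) • slot i x)
    (D : UniversalEnvelopingAlgebra ℂ N →ₗ[ℂ] UniversalEnvelopingAlgebra ℂ N)
    (hLeibniz : ∀ a b, D (a * b) = a * D b + D a * b)
    (hDe : ∀ (m : ℕ) (x : g),
      D (UniversalEnvelopingAlgebra.ι ℂ (e m x))
        = (-(m + 1) : ℂ) • UniversalEnvelopingAlgebra.ι ℂ (e (m + 1) x))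
    (A : Subalgebra ℂ (UniversalEnvelopingAlgebra ℂ N))
    (hA : ∀ a ∈ A, D a ∈ A)
    (z : Fin n → ℂ) (hz : ∀ i, z i ≠ 0)
    (b : ℂ) (hzb : ∀ i, z i + b ≠ 0) :
    A.map (φ (fun i => z i + b) hzb) = A.map (φ z hz) :=
  le_antisymm
    (map_le_map_of_translate e slot φ D hbij.surjective hφ hLeibniz hDe A hA z hz _ hzb b
      fun _ => rfl)
    (map_le_map_of_translate e slot φ D hbij.surjective hφ hLeibniz hDe A hA _ hzb z hz (-b)
      fun _ => by ring)

/-- let `N = ĝ₋` be presented by the maps `e n` (`e n x` representing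
`x ⊗ t^{-(n+1)}`), let `φ_{z₁,…,z_n} = (φ_{z₁} ⊗ ⋯ ⊗ φ_{z_n}) ∘ diag_n` be the
evaluation homomorphisms `U(ĝ₋) → U(g)^{⊗ n}` (characterized by their values on the
generators), let `D = ∂_t` be the derivation of `U(ĝ₋)` with
`∂_t(x ⊗ tᵐ) = m·x ⊗ t^{m−1}`, and let `A ⊆ U(ĝ₋)` be a subalgebra stable under
`∂_t`.  Then `A(z₁,…,z_n) = φ_{z₁,…,z_n}(A)` is stable under simultaneous translation
of the parameters: `A(z₁+b,…,z_n+b) = A(z₁,…,z_n)` whenever all `z_i` and `z_i + b`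
are nonzero. -/
theorem stmt19 {N : Type*} [LieRing N] [LieAlgebra ℂ N]
    (e : ℕ → g →ₗ[ℂ] N)
    (hbracket : ∀ (m k : ℕ) (x y : g), ⁅e m x, e k y⁆ = e (m + k + 1) ⁅x, y⁆)
    (hbij : Function.Bijective (Finsupp.lsum ℂ e))
    {n : ℕ}
    (φ : ∀ z : Fin n → ℂ, (∀ i, z i ≠ 0) →
      (UniversalEnvelopingAlgebra ℂ N →ₐ[ℂ]
        ⨂[ℂ] _ : Fin n, UniversalEnvelopingAlgebra ℂ g))
    (hφ : ∀ (z : Fin n → ℂ) (hz : ∀ i, z i ≠ 0) (m : ℕ) (x : g),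
      φ z hz (UniversalEnvelopingAlgebra.ι ℂ (e m x))
        = ∑ i, ((z i)⁻¹) ^ (m + 1) • slot i x)
    (D : UniversalEnvelopingAlgebra ℂ N →ₗ[ℂ] UniversalEnvelopingAlgebra ℂ N)
    (hLeibniz : ∀ a b, D (a * b) = a * D b + D a * b)
    (hDe : ∀ (m : ℕ) (x : g),
      D (UniversalEnvelopingAlgebra.ι ℂ (e m x))
        = (-(m + 1) : ℂ) • UniversalEnvelopingAlgebra.ι ℂ (e (m + 1) x))
    (A : Subalgebra ℂ (UniversalEnvelopingAlgebra ℂ N))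
    (hA : ∀ a ∈ A, D a ∈ A)
    (z : Fin n → ℂ) (hz : ∀ i, z i ≠ 0)
    (b : ℂ) (hzb : ∀ i, z i + b ≠ 0) :
    A.map (φ (fun i => z i + b) hzb) = A.map (φ z hz) :=
  stmt19_general e hbij φ hφ D hLeibniz hDe A hA z hz b hzb
end
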